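/- For every standard word w of total length r, the column reading of the conjugate multipartition recovers w: s^c_{γ̲_w′ ; f_w} = w, where γ̲_w′ = (γ^{(m)′},…,γ^{(1)′}) is the multipartition of conjugate partitions taken in reversed order and f_w = (f_1,…,f_m). -/

import Mathlib

/-- An integral segment: a pair `(i, j)` of integers (proper when `i ≤ j`). -/
abbrev Seg := ℤ × ℤ

/-- The length `j - i + 1` of a segment. -/
def segLen (s : Seg) : ℤ := s.2 - s.1 + 1

/-- A standard word of total length `r`: a nonempty sequence of integral segments whose
upper endpoints weakly increase, such that lower endpoints weakly decrease on ties,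
of total length `r`. -/
def IsStandardWord (r : ℕ) (w : List Seg) : Prop :=
  w ≠ [] ∧ (∀ s ∈ w, s.1 ≤ s.2) ∧
  w.Chain' (fun p q => p.2 ≤ q.2 ∧ (p.2 = q.2 → q.1 ≤ p.1)) ∧
  (w.map segLen).sum = (r : ℤ)

/-- Number of further segments continuing the chain started at `p`:
consecutive upper endpoints increase by exactly 1 and lower endpoints strictly increase. -/
def chainLen : Seg → List Seg → ℕ
  | _, [] => 0
  | p, q :: rest => if q.2 = p.2 + 1 ∧ p.1 < q.1 then chainLen q rest + 1 else 0

/-- The block decomposition of a word into maximal chains. -/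
def blocks : List Seg → List (List Seg)
  | [] => []
  | p :: rest =>
      (p :: rest.take (chainLen p rest)) :: blocks (rest.drop (chainLen p rest))
termination_by w => w.length
decreasing_by
  simp only [List.length_drop, List.length_cons]
  omega

/-- `γ̲_w`: the multipartition attached to a word by the block decomposition. -/
def gammaOf (w : List Seg) : List (List ℕ) :=
  (blocks w).map (fun b => b.map (fun s => (segLen s).toNat))

/-- `f_w`: the tuple of upper endpoints of the first segments of the blocks,
in reversed block order (so `f_m = j_1`). -/
def fOf (w : List Seg) : List ℤ :=
  ((blocks w).map (fun b => (b.headI).2)).reverse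

/-- A partition: a weakly decreasing list of positive integers. -/
def IsPartition (p : List ℕ) : Prop := p.Pairwise (· ≥ ·) ∧ ∀ x ∈ p, 0 < x

/-- The `j`-th part of a partition (1-based), with the convention `p_j = 0` for `j > ℓ(p)`. -/
def part (p : List ℕ) (j : ℕ) : ℕ := p.getD (j - 1) 0

/-- The `a`-th entry of an integer tuple (1-based). -/
def fpart (f : List ℤ) (a : ℕ) : ℤ := f.getD (a - 1) 0

/-- The `a`-th component of a multipartition (1-based). -/
def mpart (γ : List (List ℕ)) (a : ℕ) : List ℕ := γ.getD (a - 1) []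

/-- A multipartition of `r`: a tuple of partitions of total size `r`. -/
def IsMultipartition (r : ℕ) (γ : List (List ℕ)) : Prop :=
  (∀ p ∈ γ, IsPartition p) ∧ (γ.map List.sum).sum = r

/-- `f* = (−f_m, …, −f_1)`. -/
def fstar (f : List ℤ) : List ℤ := (f.map (fun x => -x)).reverse

/-- Kleshchev multipartition relative to a weakly decreasing integer tuple `g`:
`γ^{(k)}_{j + g_k − g_{k+1}} ≤ γ^{(k+1)}_j` for all `j ≥ 1` and `1 ≤ k ≤ m−1`. -/
def IsKleshchev (g : List ℤ) (γ : List (List ℕ)) : Prop :=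
  ∀ k j, 1 ≤ k → k ≤ g.length - 1 → 1 ≤ j →
    part (mpart γ k) (j + (fpart g k - fpart g (k + 1)).toNat) ≤ part (mpart γ (k + 1)) j

/-- Standard Kleshchev multipartition of `r` relative to `f`: conditions (SK1)–(SK3). -/
def IsStandardKleshchev (r : ℕ) (f : List ℤ) (γ : List (List ℕ)) : Prop :=
  γ.length = f.length ∧
  IsMultipartition r γ ∧
  (∀ a, 1 ≤ a → a ≤ γ.length → mpart γ a ≠ []) ∧
  (∀ a, 1 ≤ a → a ≤ f.length - 1 →
    ((mpart γ a).length : ℤ) ≤ (fpart f a - fpart f (a + 1)) + 1 ∧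
    part (mpart γ a) ((fpart f a - fpart f (a + 1)).toNat + 1) ≤ part (mpart γ (a + 1)) 1) ∧
  (∀ a, 1 ≤ a → a ≤ f.length - 1 →
    ((mpart γ a).length : ℤ) = fpart f a - fpart f (a + 1) →
    (part (mpart γ a) ((fpart f a - fpart f (a + 1)).toNat) : ℤ) ≤
      (part (mpart γ (a + 1)) 1 : ℤ) - 1)

/-- `λ′_j = #{a : λ_a ≥ j}`. -/
def conjCount (p : List ℕ) (j : ℕ) : ℕ := (p.filter (fun x => j ≤ x)).length

/-- The conjugate partition, as a list of length `λ_1`. -/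
def conjList (p : List ℕ) : List ℕ := (List.range p.headI).map (fun j0 => conjCount p (j0 + 1))

/-- `λ̲′ = (λ^{(m)′}, …, λ^{(1)′})`. -/
def conjMulti (γ : List (List ℕ)) : List (List ℕ) := (γ.map conjList).reverse

/-- Column residual segments of a single partition with parameter `fk`:
the `j`-th one is `(f_k + j − λ′_j, f_k + j − 1)`, for `j = 1, …, λ_1`. -/
def colSegs (fk : ℤ) (p : List ℕ) : List Seg :=
  (List.range p.headI).map (fun (j0 : ℕ) =>
    (fk + (j0 : ℤ) + 1 - (conjCount p (j0 + 1) : ℤ), fk + (j0 : ℤ)))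

/-- Column reading `s^c_{λ̲;f}`: components `k = m, …, 1`, columns `j = 1, …, λ^{(k)}_1`. -/
def colReading (f : List ℤ) (lam : List (List ℕ)) : List Seg :=
  (((lam.zip f).reverse).map (fun pk => colSegs pk.2 pk.1)).flatten

/-- Row residual segments of a single partition with parameter `fk`:
the `i`-th one is `(f_k + 1 − i, f_k + λ_i − i)`, for `i = 1, …, ℓ(λ)`. -/
def rowSegs (fk : ℤ) (p : List ℕ) : List Seg :=
  (List.range p.length).map (fun (i0 : ℕ) =>
    (fk - (i0 : ℤ), fk + ((p.getD i0 0 : ℕ) : ℤ) - (i0 : ℤ) - 1))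

/-- Row reading `s^r_{λ̲;f}`: components `k = 1, …, m`, rows `i = 1, …, ℓ(λ^{(k)})`. -/
def rowReading (f : List ℤ) (lam : List (List ℕ)) : List Seg :=
  ((lam.zip f).map (fun pk => rowSegs pk.2 pk.1)).flatten

/-- The inverse of a segment: `(i, j) ↦ (−j, −i)`. -/
def segInv (s : Seg) : Seg := (-s.2, -s.1)

/-- The word attached to a tuple `f` and a multipartition `γ`:
for each `a = 1, …, m` and `b = 1, …, ℓ(γ^{(a)})` the segment
`(f_{m−a+1} − γ^{(a)}_b + b, f_{m−a+1} + b − 1)`. -/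
def wordOf (f : List ℤ) (γ : List (List ℕ)) : List Seg :=
  ((List.range γ.length).map (fun a0 =>
    (List.range (γ.getD a0 []).length).map (fun b0 =>
      (f.getD (f.length - 1 - a0) 0 - ((γ.getD a0 []).getD b0 0 : ℤ) + (b0 + 1 : ℤ),
       f.getD (f.length - 1 - a0) 0 + (b0 : ℤ))))).flatten


/-- The `i`-th Drinfeld polynomial of a multiset of integral segments:
`Q_i(x) = ∏_{b : |s_b| ≥ i} (1 − q^{2(j_b + 1 − i)} x)`. -/
noncomputable def drinfeld (q : ℂ) (s : Multiset Seg) (i : ℕ) : Polynomial ℂ :=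
  ((s.filter (fun p => (i : ℤ) ≤ segLen p)).map
    (fun p => 1 - Polynomial.C (q ^ (2 * (p.2 + 1 - (i : ℤ)))) * Polynomial.X)).prod

/-- The column segments of the skew shape `λ/ν`: one segment
`(j − λ′_j, j − ν′_j − 1)` for each column `j` with `λ′_j > ν′_j`. -/
def skewSegList (lam nu : List ℕ) : List Seg :=
  ((List.range lam.headI).filter (fun j0 => conjCount nu (j0 + 1) < conjCount lam (j0 + 1))).map
    (fun (j0 : ℕ) => ((j0 : ℤ) + 1 - (conjCount lam (j0 + 1) : ℤ),
      (j0 : ℤ) - (conjCount nu (j0 + 1) : ℤ)))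

/-- A cell of the Young diagram of `λ` (1-based coordinates). -/
def IsYCell (lam : List ℕ) (a b : ℕ) : Prop := 1 ≤ a ∧ 1 ≤ b ∧ b ≤ part lam a

/-- A cell of the skew shape `λ/ν` (1-based coordinates). -/
def IsSkewCell (lam nu : List ℕ) (a b : ℕ) : Prop := 1 ≤ a ∧ part nu a < b ∧ b ≤ part lam a

instance (lam nu : List ℕ) (a b : ℕ) : Decidable (IsSkewCell lam nu a b) := by
  unfold IsSkewCell; infer_instance

/-- A semistandard skew tableau of shape `λ/ν`, encoded as a function on 1-based coordinates
vanishing outside the shape, with positive entries weakly increasing along rows and strictly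
increasing down columns. -/
def IsSSSkewTableau (lam nu : List ℕ) (T : ℕ → ℕ → ℕ) : Prop :=
  (∀ a b, ¬ IsSkewCell lam nu a b → T a b = 0) ∧
  (∀ a b, IsSkewCell lam nu a b → 1 ≤ T a b) ∧
  (∀ a b, IsSkewCell lam nu a b → IsSkewCell lam nu a (b + 1) → T a b ≤ T a (b + 1)) ∧
  (∀ a b, IsSkewCell lam nu a b → IsSkewCell lam nu (a + 1) b → T a b < T (a + 1) b)

/-- Number of cells of `λ/ν` where `T` takes the value `i`. -/
def entryCount (lam nu : List ℕ) (T : ℕ → ℕ → ℕ) (i : ℕ) : ℕ :=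
  ((Finset.range (lam.length + 1) ×ˢ Finset.range (lam.headI + 1)).filter
    (fun ab => IsSkewCell lam nu ab.1 ab.2 ∧ T ab.1 ab.2 = i)).card

/-- The reverse reading word of a skew tableau: each row right to left, rows top to bottom. -/
def rword (lam nu : List ℕ) (T : ℕ → ℕ → ℕ) : List ℕ :=
  ((List.range lam.length).map (fun a0 =>
    (List.range (part lam (a0 + 1) - part nu (a0 + 1))).map
      (fun k => T (a0 + 1) (part lam (a0 + 1) - k)))).flatten

/-- A lattice word: in every prefix, `i` occurs at least as often as `i + 1`, for all `i ≥ 1`. -/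
def IsLatticeWord (L : List ℕ) : Prop :=
  ∀ n i, 1 ≤ i → (L.take n).count (i + 1) ≤ (L.take n).count i

/-- `ρ_i = #{j : λ′_j − ν′_j ≥ i}`. -/
def rhoVal (lam nu : List ℕ) (i : ℕ) : ℕ :=
  ((Finset.range lam.headI).filter
    (fun j0 => i + conjCount nu (j0 + 1) ≤ conjCount lam (j0 + 1))).card

/-- `t^λ(a,b) = λ_1 + ⋯ + λ_{a−1} + b`: the row-by-row enumeration of the cells of `λ`. -/
def rowIdx (lam : List ℕ) (a b : ℕ) : ℕ := (lam.take (a - 1)).sum + b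

/-- `t_λ(a,b) = λ′_1 + ⋯ + λ′_{b−1} + a`: the column-by-column enumeration of the cells of `λ`. -/
def colIdx (lam : List ℕ) (a b : ℕ) : ℕ := ((conjList lam).take (b - 1)).sum + a

/-- A cell of the Young diagram of a multipartition: component `k`, row `a`, column `b`. -/
def IsMCell (lam : List (List ℕ)) (k a b : ℕ) : Prop :=
  1 ≤ k ∧ k ≤ lam.length ∧ IsYCell (lam.getD (k - 1) []) a b

/-- `t^{λ̲}`: row-by-row enumeration, components in order `1, …, m`. -/
def mRowIdx (lam : List (List ℕ)) (k a b : ℕ) : ℕ :=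
  ((lam.take (k - 1)).map List.sum).sum + rowIdx (lam.getD (k - 1) []) a b

/-- `t_{λ̲}`: column-by-column enumeration, components in order `m, …, 1`. -/
def mColIdx (lam : List (List ℕ)) (k a b : ℕ) : ℕ :=
  ((lam.drop k).map List.sum).sum + colIdx (lam.getD (k - 1) []) a b

/-!
In a block `((i_1, j_1), …, (i_k, j_k))` of `w` the upper endpoints are `j_a = j_1 + a - 1` and the
lower endpoints strictly increase, so the lengths `γ_a = j_a - i_a + 1` weakly decrease: `γ` is a
partition and `(i_a, j_a) = (j_1 + a - γ_a, j_1 + a - 1)`. The `a`-th column residual segment of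
`γ′` for `f = j_1` is `(j_1 + a - γ″_a, j_1 + a - 1)`, and `γ″ = γ`. The reversals in `conjMulti`,
`fOf` and `colReading` cancel, so the column reading concatenates the blocks in order, giving `w`.
-/

def IsBlockStep (p q : Seg) : Prop := q.2 = p.2 + 1 ∧ p.1 < q.1

def blockColReading (b : List Seg) : List Seg :=
  colSegs b.headI.2 (conjList (b.map fun s => (segLen s).toNat))

section Conjugate

variable {L : List ℕ}

theorem conjCount_cons_of_forall_le {x : ℕ} {t : List ℕ} (ht : ∀ y ∈ t, y ≤ x) (j : ℕ) :
    conjCount (x :: t) j = if j ≤ x then conjCount t j + 1 else 0 := by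
  unfold conjCount
  split_ifs with hj
  · simp [hj]
  · have hnil : t.filter (fun y => j ≤ y) = [] :=
      List.filter_eq_nil_iff.mpr fun y hy => by have := ht y hy; simp; omega
    simp [hj, hnil]

theorem lt_conjCount_iff (hL : L.Pairwise (· ≥ ·)) {a : ℕ} (ha : a < L.length) (j : ℕ) :
    a < conjCount L j ↔ j ≤ L[a] := by
  induction L generalizing a with
  | nil => simp at ha
  | cons x t ih =>
    obtain ⟨hx, ht⟩ := List.pairwise_cons.mp hL
    rw [conjCount_cons_of_forall_le hx]
    cases a with
    | zero => split_ifs <;> simp_all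
    | succ a =>
      have ha' : a < t.length := by simpa using ha
      have := hx t[a] (List.getElem_mem ha')
      by_cases hj : j ≤ x
      · simp [hj, ← ih ht ha']
      · simp only [hj, if_false, List.getElem_cons_succ]
        omega

theorem getElem_le_headI (hL : L.Pairwise (· ≥ ·)) {a : ℕ} (ha : a < L.length) :
    L[a] ≤ L.headI := by
  cases L with
  | nil => simp at ha
  | cons x t =>
    cases a with
    | zero => simp
    | succ a => exact List.rel_of_pairwise_cons hL (List.getElem_mem _)

theorem conjCount_conjList (hL : L.Pairwise (· ≥ ·)) {a : ℕ} (ha : a < L.length) :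
    conjCount (conjList L) (a + 1) = L[a] := by
  have hcols : ∀ j0 ∈ List.range L.headI,
      decide (a + 1 ≤ conjCount L (j0 + 1)) = decide (j0 < L[a]) := by
    intro j0 _
    simpa [Nat.succ_le_iff] using lt_conjCount_iff hL ha (j0 + 1)
  unfold conjCount conjList
  rw [List.filter_map, List.length_map, Function.comp_def, List.filter_congr hcols,
    ← List.Ico.zero_bot, List.Ico.filter_lt, List.Ico.length]
  have := getElem_le_headI hL ha
  omega

theorem headI_conjList (hpos : ∀ x ∈ L, 0 < x) : (conjList L).headI = L.length := by
  cases L with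
  | nil => rfl
  | cons x t =>
    obtain ⟨k, hk⟩ : ∃ k, x = k + 1 := Nat.exists_eq_add_one.mpr (hpos x List.mem_cons_self)
    have hall : (x :: t).filter (fun y => 1 ≤ y) = x :: t :=
      List.filter_eq_self.mpr fun y hy => decide_eq_true (hpos y hy)
    show ((List.range x).map _).headI = _
    rw [hk, List.range_succ_eq_map, List.map_cons, List.headI_cons, ← hk]
    simp only [conjCount, Nat.zero_add, hall]

theorem colSegs_conjList (f : ℤ) (hL : L.Pairwise (· ≥ ·)) (hpos : ∀ x ∈ L, 0 < x) :
    colSegs f (conjList L) = L.mapIdx fun a (x : ℕ) => (f + a + 1 - (x : ℤ), f + a) := by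
  apply List.ext_getElem
  · simp [colSegs, headI_conjList hpos]
  · intro a h₁ h₂
    simp [colSegs, conjCount_conjList hL (by simpa using h₂)]

end Conjugate

section Blocks

theorem mapIdx_segLen_eq_self (b : List Seg) (f : ℤ) (hc : b.IsChain IsBlockStep)
    (hf : ∀ s ∈ b.head?, s.2 = f) (hb : ∀ s ∈ b, s.1 ≤ s.2) :
    (b.map fun s => (segLen s).toNat).mapIdx (fun a (x : ℕ) => (f + a + 1 - (x : ℤ), f + a)) =
      b := by
  induction b generalizing f with
  | nil => rfl
  | cons s t ih =>
    have hs : s.2 = f := hf s rfl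
    have hrest : t.IsChain IsBlockStep ∧ ∀ u ∈ t.head?, u.2 = f + 1 := by
      cases t with
      | nil => simp
      | cons u t =>
        obtain ⟨hsu, ht⟩ := List.isChain_cons_cons.mp hc
        exact ⟨ht, by simp [hsu.1, hs]⟩
    have ht := ih (f + 1) hrest.1 hrest.2 fun u hu => hb u (List.mem_cons_of_mem s hu)
    have hs1 := hb s List.mem_cons_self
    rw [List.map_cons, List.mapIdx_cons]
    congr 1
    · ext <;> simp [segLen] <;> omega
    · convert ht using 3 with a x
      push_cast
      ring_nf

theorem blockColReading_eq_self {b : List Seg} (hc : b.IsChain IsBlockStep)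
    (hb : ∀ s ∈ b, s.1 ≤ s.2) : blockColReading b = b := by
  have hsorted : (b.map fun s => (segLen s).toNat).Pairwise (· ≥ ·) := by
    refine List.isChain_iff_pairwise.mp ((List.isChain_map _).mpr (hc.imp ?_))
    intro p q hpq
    obtain ⟨h₁, h₂⟩ := hpq
    simp only [segLen]
    omega
  have hpos : ∀ x ∈ b.map fun s => (segLen s).toNat, 0 < x := by
    simp only [List.mem_map, forall_exists_index, and_imp, forall_apply_eq_imp_iff₂]
    intro s hs
    have := hb s hs
    simp only [segLen]
    omega
  rw [blockColReading, colSegs_conjList _ hsorted hpos]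
  refine mapIdx_segLen_eq_self b _ hc ?_ hb
  cases b <;> simp

theorem isChain_cons_take_chainLen (p : Seg) (rest : List Seg) :
    (p :: rest.take (chainLen p rest)).IsChain IsBlockStep := by
  induction rest generalizing p with
  | nil => simp [chainLen]
  | cons q t ih =>
    unfold chainLen
    split_ifs with h
    · exact List.isChain_cons_cons.mpr ⟨h, ih q⟩
    · simp

theorem flatten_blocks (w : List Seg) : (blocks w).flatten = w := by
  induction w using blocks.induct with
  | case1 => simp [blocks]
  | case2 p rest ih => rw [blocks, List.flatten_cons, ih]; simp

theorem isChain_of_mem_blocks {w b : List Seg} (hb : b ∈ blocks w) : b.IsChain IsBlockStep := by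
  induction w using blocks.induct with
  | case1 => simp [blocks] at hb
  | case2 p rest ih =>
    rw [blocks, List.mem_cons] at hb
    rcases hb with rfl | hb
    · exact isChain_cons_take_chainLen p rest
    · exact ih hb

end Blocks

theorem colReading_conjMulti_gammaOf (w : List Seg) :
    colReading (fOf w) (conjMulti (gammaOf w)) = ((blocks w).map blockColReading).flatten := by
  unfold colReading fOf conjMulti gammaOf
  rw [List.map_map, ← List.map_reverse, ← List.map_reverse, List.zip_map', ← List.map_reverse,
    List.reverse_reverse, List.map_map]
  rfl

/-- For every standard word `w` of total length `r`, the column reading of the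
conjugate multipartition `γ̲_w′ = (γ^{(m)′}, …, γ^{(1)′})` with respect to `f_w` recovers `w`. -/
theorem colReading_conj_gamma_eq (r : ℕ) (w : List Seg) (hw : IsStandardWord r w) :
    colReading (fOf w) (conjMulti (gammaOf w)) = w := by
  have hblock : ∀ b ∈ blocks w, blockColReading b = b := fun b hb =>
    blockColReading_eq_self (isChain_of_mem_blocks hb) fun s hs =>
      hw.2.1 s (flatten_blocks w ▸ List.mem_flatten_of_mem hb hs)
  rw [colReading_conjMulti_gammaOf, List.map_congr_left hblock, List.map_id', flatten_blocks]
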